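/- Let X be a set with two metrics d_i and d_o satisfying d_o ≤ d_i, and let δ₁, δ₂, δ₁′, δ₂′ : (0,η) → X be arcs with d_i(δᵢ(t), δᵢ′(t)) = Θ(t^q) for i = 1, 2, where q strictly exceeds the inner contact exponent q_i(δ₁′,δ₂′) of δ₁′ and δ₂′. If q_i(δ₁,δ₂) = q_o(δ₁,δ₂) (the pair δ₁,δ₂ satisfies the arc criterion), then also q_i(δ₁′,δ₂′) = q_o(δ₁′,δ₂′). (Partner pair lemma.) -/

import Mathlib

/-!
By the triangle inequality, replacing `δ₁, δ₂` by `δ₁', δ₂'` changes `d_i(δ₁, δ₂)` and, since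
`d_o ≤ d_i`, also `d_o(δ₁, δ₂)` by at most `d_i(δ₁, δ₁') + d_i(δ₂, δ₂') = O(t^q)`. A perturbation
`O(t^q)` of a function `Θ(t^a)` with `a < q` is negligible and leaves the exponent unchanged.
This gives `q_i(δ₁', δ₂') = q_i(δ₁, δ₂)`, hence `q_o(δ₁, δ₂) = q_i(δ₁, δ₂) < q`, and then
`q_o(δ₁', δ₂') = q_o(δ₁, δ₂)`.
-/

/-- `f(t) = Θ(t^q)` as `t → 0⁺`. -/
def ThetaAt (f : ℝ → ℝ) (q : ℝ) : Prop :=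
  ∃ η > (0 : ℝ), ∃ K : ℝ, 1 ≤ K ∧
    ∀ t : ℝ, 0 < t → t < η → (1 / K) * t ^ q ≤ f t ∧ f t ≤ K * t ^ q

/-- A distance function satisfying the metric axioms. -/
def IsMetric {X : Type*} (d : X → X → ℝ) : Prop :=
  (∀ x y, 0 ≤ d x y) ∧ (∀ x y, d x y = d y x) ∧
    (∀ x y z, d x z ≤ d x y + d y z) ∧ (∀ x y, d x y = 0 ↔ x = y)

open Filter Topology Asymptotics

lemma isLittleO_rpow_nhdsGT_zero_of_lt {a b : ℝ} (hab : a < b) :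
    (fun t : ℝ => t ^ b) =o[𝓝[>] 0] fun t => t ^ a := by
  have hsmall : (fun t : ℝ => t ^ (b - a)) =o[𝓝[>] 0] fun _ => (1 : ℝ) := by
    rw [isLittleO_one_iff]
    have := (Real.continuousAt_rpow_const 0 (b - a) (Or.inr (sub_pos.2 hab).le)).tendsto
    rw [Real.zero_rpow (sub_pos.2 hab).ne'] at this
    exact this.mono_left nhdsWithin_le_nhds
  refine ((isBigO_refl (fun t : ℝ => t ^ a) _).mul_isLittleO hsmall).congr' ?_ (by simp)
  filter_upwards [self_mem_nhdsWithin] with t (ht : 0 < t)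
  rw [← Real.rpow_add ht, add_sub_cancel]

lemma eq_of_rpow_isTheta_rpow_nhdsGT_zero {a b : ℝ}
    (h : (fun t : ℝ => t ^ a) =Θ[𝓝[>] 0] fun t => t ^ b) : a = b := by
  have hne (c : ℝ) : ∃ᶠ t : ℝ in 𝓝[>] 0, t ^ c ≠ 0 := by
    refine Eventually.frequently ?_
    filter_upwards [self_mem_nhdsWithin] with t (ht : 0 < t)
    exact (Real.rpow_pos_of_pos ht c).ne'
  rcases lt_trichotomy a b with hab | hab | hab
  · exact (isLittleO_irrefl (hne a)
      (h.isBigO.trans_isLittleO (isLittleO_rpow_nhdsGT_zero_of_lt hab))).elim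
  · exact hab
  · exact (isLittleO_irrefl (hne b)
      (h.symm.isBigO.trans_isLittleO (isLittleO_rpow_nhdsGT_zero_of_lt hab))).elim

lemma ThetaAt.isTheta {f : ℝ → ℝ} {q : ℝ} (hf : ThetaAt f q) :
    f =Θ[𝓝[>] 0] fun t => t ^ q := by
  obtain ⟨η, hη, K, hK, hbound⟩ := hf
  have hK0 : 0 < K := by linarith
  have hbounds : ∀ᶠ t in 𝓝[>] 0, t ^ q ≤ K * f t ∧ f t ≤ K * t ^ q ∧ 0 < t ^ q := by
    filter_upwards [Ioo_mem_nhdsGT hη] with t ⟨ht0, htη⟩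
    obtain ⟨hlow, hup⟩ := hbound t ht0 htη
    rw [div_mul_eq_mul_div, one_mul, div_le_iff₀ hK0] at hlow
    exact ⟨by linarith, hup, Real.rpow_pos_of_pos ht0 q⟩
  refine ⟨.of_bound K ?_, .of_bound K ?_⟩ <;>
    filter_upwards [hbounds] with t ⟨hlow, hup, hpos⟩ <;>
    rw [Real.norm_of_nonneg hpos.le, Real.norm_of_nonneg (by nlinarith)] <;>
    assumption

lemma ThetaAt.exponent_eq_of_sub_isBigO {f g : ℝ → ℝ} {a b q : ℝ}
    (hf : ThetaAt f a) (hg : ThetaAt g b)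
    (hfg : (g - f) =O[𝓝[>] 0] fun t => t ^ q) (ha : a < q) : a = b := by
  have hsmall := hfg.trans_isLittleO (isLittleO_rpow_nhdsGT_zero_of_lt ha)
  have hga : g =Θ[𝓝[>] 0] fun t => t ^ a := by
    simpa only [add_sub_cancel] using hf.isTheta.add_isLittleO hsmall
  exact eq_of_rpow_isTheta_rpow_nhdsGT_zero (hga.symm.trans hg.isTheta)

lemma IsMetric.abs_sub_le {X : Type*} {d : X → X → ℝ} (hd : IsMetric d) (x y x' y' : X) :
    |d x y - d x' y'| ≤ d x x' + d y y' := by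
  obtain ⟨-, hsymm, htri, -⟩ := hd
  have := htri x x' y; have := htri x' y' y; have := htri x' x y'; have := htri x y y'
  rw [abs_sub_le_iff]; constructor <;> linarith [hsymm x x', hsymm y y']

/-- Partner pair lemma. -/
theorem partner_pair {X : Type*} (din dout : X → X → ℝ)
    (hdin : IsMetric din) (hdout : IsMetric dout)
    (hle : ∀ x y, dout x y ≤ din x y)
    (δ₁ δ₂ δ₁' δ₂' : ℝ → X) (q qi' qo' qi qo : ℝ)
    (h₁ : ThetaAt (fun t => din (δ₁ t) (δ₁' t)) q)
    (h₂ : ThetaAt (fun t => din (δ₂ t) (δ₂' t)) q)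
    (hqi' : ThetaAt (fun t => din (δ₁' t) (δ₂' t)) qi')
    (hqo' : ThetaAt (fun t => dout (δ₁' t) (δ₂' t)) qo')
    (hqi : ThetaAt (fun t => din (δ₁ t) (δ₂ t)) qi)
    (hqo : ThetaAt (fun t => dout (δ₁ t) (δ₂ t)) qo)
    (hq : qi' < q)
    (harc : qi = qo) :
    qi' = qo' := by
  have hperturb {d : X → X → ℝ} (hd : IsMetric d) (hdle : ∀ x y, d x y ≤ din x y) :
      (fun t => d (δ₁ t) (δ₂ t) - d (δ₁' t) (δ₂' t)) =O[𝓝[>] 0] fun t => t ^ q := by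
    refine (isBigO_of_le _ fun t => ?_).trans (h₁.isTheta.isBigO.add h₂.isTheta.isBigO)
    rw [Real.norm_eq_abs, Real.norm_eq_abs]
    calc |d (δ₁ t) (δ₂ t) - d (δ₁' t) (δ₂' t)|
        ≤ d (δ₁ t) (δ₁' t) + d (δ₂ t) (δ₂' t) := hd.abs_sub_le _ _ _ _
      _ ≤ din (δ₁ t) (δ₁' t) + din (δ₂ t) (δ₂' t) := add_le_add (hdle _ _) (hdle _ _)
      _ ≤ |din (δ₁ t) (δ₁' t) + din (δ₂ t) (δ₂' t)| := le_abs_self _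
  have hinner : qi' = qi := hqi'.exponent_eq_of_sub_isBigO hqi (hperturb hdin fun _ _ => le_rfl) hq
  have houter : qo = qo' := by
    refine hqo.exponent_eq_of_sub_isBigO hqo' ?_ (by linarith : qo < q)
    simpa only [neg_sub, Pi.sub_def] using (hperturb hdout hle).neg_left
  linarith
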